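/- Let C ⊆ F_2^n be a binary code with a generator matrix G whose rows r_1, ..., r_m satisfy: r_i ⋆ r_j has even weight for all i ≠ j and r_i ⋆ r_j ⋆ r_k has even weight for pairwise distinct i, j, k. Then for every c ∈ C of even Hamming weight and every pair of distinct rows r_i, r_j, the vector r_i ⋆ r_j ⋆ c has even Hamming weight; equivalently (r_i ⋆ r_j) · c = 0. -/

import Mathlib

open Matrix

/-- A binary matrix is triorthogonal if every Schur (coordinatewise) product of two
distinct rows and of three pairwise distinct rows has even Hamming weight. -/
def Triorthogonal {m n : ℕ} (G : Matrix (Fin m) (Fin n) (ZMod 2)) : Prop :=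
  (∀ i j : Fin m, i ≠ j → Even (hammingNorm (G i * G j))) ∧
  (∀ i j k : Fin m, i ≠ j → i ≠ k → j ≠ k → Even (hammingNorm (G i * G j * G k)))

/-- The Schur square `C^{⋆2}` of a binary linear code. -/
def schurSquare {n : ℕ} (C : Submodule (ZMod 2) (Fin n → ZMod 2)) :
    Submodule (ZMod 2) (Fin n → ZMod 2) :=
  Submodule.span (ZMod 2) {x | ∃ c ∈ C, ∃ c' ∈ C, x = c * c'}

/-- The dual code `C^⊥`. -/
def dualCode {n : ℕ} (C : Submodule (ZMod 2) (Fin n → ZMod 2)) :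
    Submodule (ZMod 2) (Fin n → ZMod 2) where
  carrier := {u | ∀ c ∈ C, dotProduct u c = 0}
  add_mem' := by
    intro a b ha hb c hc
    simp [add_dotProduct, ha c hc, hb c hc]
  zero_mem' := by
    intro c hc
    simp
  smul_mem' := by
    intro r a ha c hc
    simp [smul_dotProduct, ha c hc]

/-- A binary code is triorthogonal if it has a triorthogonal generator matrix
(whose number of rows equals the dimension of the code). -/
def IsTriorthogonalCode {n : ℕ} (C : Submodule (ZMod 2) (Fin n → ZMod 2)) : Prop :=
  ∃ (m : ℕ) (G : Matrix (Fin m) (Fin n) (ZMod 2)), Triorthogonal G ∧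
    Submodule.span (ZMod 2) (Set.range fun i => G i) = C ∧
    m = Module.finrank (ZMod 2) C

/-!
Over `𝔽₂` the weight of a vector is, mod 2, the sum of its coordinates, so
`wt(u ⋆ c) ≡ u · c`, and `c ↦ (r_i ⋆ r_j) · c` is linear. It therefore suffices to check
`(r_i ⋆ r_j) · r_h = 0` on the rows: for `h ∉ {i, j}` this is triple triorthogonality, and
for `h ∈ {i, j}` idempotence `r_h ⋆ r_h = r_h` reduces it to the evenness of `wt(r_i ⋆ r_j)`.
-/

theorem Pi.zmod_two_mul_self {ι : Type*} (x : ι → ZMod 2) : x * x = x :=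
  funext fun k => by rw [Pi.mul_apply, ← sq, ZMod.pow_card]

section HammingWeight

variable {ι : Type*} [Fintype ι]

theorem hammingNorm_cast_zmod_two (x : ι → ZMod 2) :
    (hammingNorm x : ZMod 2) = ∑ k, x k := by
  rw [hammingNorm, Finset.card_filter, Nat.cast_sum]
  refine Finset.sum_congr rfl fun k _ => ?_
  generalize x k = a
  fin_cases a <;> rfl

theorem even_hammingNorm_iff_sum_eq_zero (x : ι → ZMod 2) :
    Even (hammingNorm x) ↔ ∑ k, x k = 0 := by
  rw [← hammingNorm_cast_zmod_two, ZMod.natCast_eq_zero_iff, even_iff_two_dvd]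

theorem even_hammingNorm_mul_iff_dotProduct_eq_zero (u v : ι → ZMod 2) :
    Even (hammingNorm (u * v)) ↔ u ⬝ᵥ v = 0 :=
  even_hammingNorm_iff_sum_eq_zero (u * v)

end HammingWeight

theorem mem_dualCode_span_iff {n : ℕ} (u : Fin n → ZMod 2) (S : Set (Fin n → ZMod 2)) :
    u ∈ dualCode (Submodule.span (ZMod 2) S) ↔ ∀ s ∈ S, u ⬝ᵥ s = 0 := by
  refine ⟨fun hu s hs => hu s (Submodule.subset_span hs), fun hS c hc => ?_⟩
  have hle : Submodule.span (ZMod 2) S ≤ LinearMap.ker (dotProductBilin (ZMod 2) (ZMod 2) u) :=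
    Submodule.span_le.mpr hS
  exact hle hc

namespace Triorthogonal

variable {m n : ℕ} {G : Matrix (Fin m) (Fin n) (ZMod 2)}

theorem mul_dotProduct_row_eq_zero (hG : Triorthogonal G) {i j : Fin m} (hij : i ≠ j)
    (h : Fin m) : (G i * G j) ⬝ᵥ G h = 0 := by
  rw [← even_hammingNorm_mul_iff_dotProduct_eq_zero]
  by_cases hih : i = h
  · subst hih
    rw [mul_right_comm, Pi.zmod_two_mul_self]
    exact hG.1 i j hij
  by_cases hjh : j = h
  · subst hjh
    rw [mul_assoc, Pi.zmod_two_mul_self]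
    exact hG.1 i j hij
  exact hG.2 i j h hij hih hjh

theorem mul_mem_dualCode (hG : Triorthogonal G) {i j : Fin m} (hij : i ≠ j) :
    G i * G j ∈ dualCode (Submodule.span (ZMod 2) (Set.range fun h => G h)) := by
  rw [mem_dualCode_span_iff]
  rintro _ ⟨h, rfl⟩
  exact hG.mul_dotProduct_row_eq_zero hij h

end Triorthogonal

theorem stmt15 {m n : ℕ} (G : Matrix (Fin m) (Fin n) (ZMod 2))
    (C : Submodule (ZMod 2) (Fin n → ZMod 2))
    (hG : Triorthogonal G)
    (hspan : Submodule.span (ZMod 2) (Set.range fun i => G i) = C) :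
    ∀ c ∈ C, Even (hammingNorm c) → ∀ i j : Fin m, i ≠ j →
      Even (hammingNorm (G i * G j * c)) ∧ dotProduct (G i * G j) c = 0 := by
  intro c hc _ i j hij
  have hdot : (G i * G j) ⬝ᵥ c = 0 := hG.mul_mem_dualCode hij c (hspan ▸ hc)
  exact ⟨(even_hammingNorm_mul_iff_dotProduct_eq_zero _ _).mpr hdot, hdot⟩
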